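/- Let X and Y be compact metric spaces, and let E be a smooth reflexive Banach space which is 2-iso-reflexive. Suppose that Δ is a 2-local standard isometry from Lip(X,E) to Lip(Y,E). Then there exist a Lipschitz homeomorphism ψ from Y onto X (a Lipschitz bijection whose inverse is Lipschitz) and a map V from Y into Iso(E), continuous when Iso(E) is endowed with the strong operator topology, such that Δ(f)(y) = V(y)(f(ψ(y))) for all y ∈ Y and all f ∈ Lip(X,E). Moreover, Δ is a surjective linear isometry. -/

import Mathlib

/-!
For `x ∈ X` and `e ≠ 0` the peak function `z ↦ max (1 - d(z, x)) 0 • e` attains its norm `‖e‖`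
only at `x`. Hence every standard isometry agreeing with `Δ` on a pair containing it sends the
point `p x ∈ Y` where `Δ (peak x e₀)` peaks back to `x`. Pairing with an arbitrary `f` gives
`Δ f (p x) = J (f x)` for an isometry `J` with `J e = Δ (peak x e) (p x)`, and pairing two peaks
shows that `p` preserves distances below `2` in both directions; a self-map of a compact space
with this property is onto, so `p` is a bijection. On constants, `Δ` is at each `y` a 2-local
isometry of `E`, hence an isometry `V y` by 2-iso-reflexivity, and smoothness (uniqueness of the
norming functional of `Δ (peak x e) (p x)`) forces `J` to agree with `V (p x)` on `f x`. So `Δ`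
is itself a standard isometry, and standard isometries are surjective linear isometries.
-/

open Function Metric Set
open scoped NNReal

/-- A function between a metric space and a normed space is bounded and Lipschitz. -/
def IsBddLip {X E : Type*} [MetricSpace X] [NormedAddCommGroup E] (f : X → E) : Prop :=
  (∃ K : ℝ, ∀ x y : X, ‖f x - f y‖ ≤ K * dist x y) ∧ ∃ C : ℝ, ∀ x : X, ‖f x‖ ≤ C

/-- The Lipschitz constant `L(f)` of a function. -/
noncomputable def lipConst {X E : Type*} [MetricSpace X] [NormedAddCommGroup E] (f : X → E) : ℝ :=
  sInf {K : ℝ | 0 ≤ K ∧ ∀ x y : X, ‖f x - f y‖ ≤ K * dist x y}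

/-- The norm `max {L(f), ‖f‖∞}` of the space `Lip(X,E)`. -/
noncomputable def lipNorm {X E : Type*} [MetricSpace X] [NormedAddCommGroup E] (f : X → E) : ℝ :=
  max (lipConst f) (⨆ x : X, ‖f x‖)

/-- `T` is a surjective linear isometry from `Lip(X,E)` onto `Lip(Y,F)` (encoded on plain
functions, with all requirements imposed on bounded Lipschitz functions). -/
structure IsLipIso (𝕜 : Type*) {X Y E F : Type*} [RCLike 𝕜] [MetricSpace X] [MetricSpace Y]
    [NormedAddCommGroup E] [NormedSpace 𝕜 E] [NormedAddCommGroup F] [NormedSpace 𝕜 F]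
    (T : (X → E) → (Y → F)) : Prop where
  mapsLip : ∀ f, IsBddLip f → IsBddLip (T f)
  map_add : ∀ f g, IsBddLip f → IsBddLip g → T (f + g) = T f + T g
  map_smul : ∀ (c : 𝕜) (f), IsBddLip f → T (c • f) = c • T f
  norm_map : ∀ f, IsBddLip f → lipNorm (T f) = lipNorm f
  surjOn : ∀ g, IsBddLip g → ∃ f, IsBddLip f ∧ T f = g

/-- `Δ : Lip(X,E) → Lip(Y,F)` is a `2`-local isometry. -/
def Is2LocalLipIso (𝕜 : Type*) {X Y E F : Type*} [RCLike 𝕜] [MetricSpace X] [MetricSpace Y]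
    [NormedAddCommGroup E] [NormedSpace 𝕜 E] [NormedAddCommGroup F] [NormedSpace 𝕜 F]
    (Δ : (X → E) → (Y → F)) : Prop :=
  ∀ f g : X → E, IsBddLip f → IsBddLip g →
    ∃ T : (X → E) → (Y → F), IsLipIso 𝕜 T ∧ Δ f = T f ∧ Δ g = T g

/-- `φ` preserves distances less than `2`. -/
def PreservesDistLT2 {Y X : Type*} [MetricSpace Y] [MetricSpace X] (φ : Y → X) : Prop :=
  ∀ y y' : Y, dist y y' < 2 → dist (φ y) (φ y') = dist y y'

/-- Two points lie in the same `2`-component: they are joined by a finite chain of points with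
consecutive distances less than `2`. -/
def SameTwoComponent {Y : Type*} [MetricSpace Y] : Y → Y → Prop :=
  Relation.ReflTransGen fun a b => dist a b < 2

/-- `T` is a standard isometry from `Lip(X,E)` to `Lip(Y,F)`: there are `φ ∈ Iso_{<2}(Y,X)` and
`J : Y → Iso(E,F)` constant on `2`-components with `T f y = J y (f (φ y))`. -/
def IsStandardLipIso (𝕜 : Type*) {X Y E F : Type*} [RCLike 𝕜] [MetricSpace X] [MetricSpace Y]
    [NormedAddCommGroup E] [NormedSpace 𝕜 E] [NormedAddCommGroup F] [NormedSpace 𝕜 F]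
    (T : (X → E) → (Y → F)) : Prop :=
  ∃ (φ : Y → X) (ψ : X → Y) (J : Y → E ≃ₗᵢ[𝕜] F),
    Function.LeftInverse ψ φ ∧ Function.RightInverse ψ φ ∧
    PreservesDistLT2 φ ∧ PreservesDistLT2 ψ ∧
    (∀ y y' : Y, SameTwoComponent y y' → J y = J y') ∧
    ∀ f, IsBddLip f → ∀ y : Y, T f y = J y (f (φ y))

/-- `Δ : Lip(X,E) → Lip(Y,F)` is a `2`-local standard isometry. -/
def Is2LocalStdLipIso (𝕜 : Type*) {X Y E F : Type*} [RCLike 𝕜] [MetricSpace X] [MetricSpace Y]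
    [NormedAddCommGroup E] [NormedSpace 𝕜 E] [NormedAddCommGroup F] [NormedSpace 𝕜 F]
    (Δ : (X → E) → (Y → F)) : Prop :=
  ∀ f g : X → E, IsBddLip f → IsBddLip g →
    ∃ T : (X → E) → (Y → F), IsStandardLipIso 𝕜 T ∧ Δ f = T f ∧ Δ g = T g

/-- A normed space is smooth: every norm-one vector has a unique norm-one supporting functional. -/
def IsSmooth (𝕜 : Type*) (E : Type*) [RCLike 𝕜] [NormedAddCommGroup E] [NormedSpace 𝕜 E] :
    Prop :=
  ∀ e : E, ‖e‖ = 1 → ∃! u : StrongDual 𝕜 E, ‖u‖ = 1 ∧ u e = 1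

/-- A normed space is reflexive: the canonical inclusion in the double dual is onto. -/
def IsReflexiveSp (𝕜 : Type*) (E : Type*) [RCLike 𝕜] [NormedAddCommGroup E] [NormedSpace 𝕜 E] :
    Prop :=
  Function.Surjective (NormedSpace.inclusionInDoubleDual 𝕜 E)

/-- `E` is `2`-iso-reflexive: every `2`-local isometry on `E` is linear and surjective. -/
def TwoIsoReflexive (𝕜 : Type*) (E : Type*) [RCLike 𝕜] [NormedAddCommGroup E] [NormedSpace 𝕜 E] :
    Prop :=
  ∀ Δ : E → E, (∀ a b : E, ∃ T : E ≃ₗᵢ[𝕜] E, Δ a = T a ∧ Δ b = T b) →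
    (∀ a b : E, Δ (a + b) = Δ a + Δ b) ∧ (∀ (c : 𝕜) (a : E), Δ (c • a) = c • Δ a) ∧
      Function.Surjective Δ

/-- The set `A_{x,u*,f} = {(y,v*) ∈ Y × B_{F*} : v*(Δ(f)(y)) = u*(f(x))}`. -/
def setA (𝕜 : Type*) {X Y E F : Type*} [RCLike 𝕜] [MetricSpace X] [MetricSpace Y]
    [NormedAddCommGroup E] [NormedSpace 𝕜 E] [NormedAddCommGroup F] [NormedSpace 𝕜 F]
    (Δ : (X → E) → (Y → F)) (x : X) (u : StrongDual 𝕜 E) (f : X → E) :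
    Set (Y × StrongDual 𝕜 F) :=
  {p | ‖p.2‖ ≤ 1 ∧ p.2 (Δ f p.1) = u (f x)}

/-- The set `A_{x,u*} = ⋂_{f ∈ Lip(X,E)} A_{x,u*,f}`. -/
def setAInter (𝕜 : Type*) {X Y E F : Type*} [RCLike 𝕜] [MetricSpace X] [MetricSpace Y]
    [NormedAddCommGroup E] [NormedSpace 𝕜 E] [NormedAddCommGroup F] [NormedSpace 𝕜 F]
    (Δ : (X → E) → (Y → F)) (x : X) (u : StrongDual 𝕜 E) :
    Set (Y × StrongDual 𝕜 F) :=
  ⋂ f ∈ {f : X → E | IsBddLip f}, setA 𝕜 Δ x u f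

section BddLip

variable {A B E : Type*} [MetricSpace A] [MetricSpace B] [NormedAddCommGroup E]

lemma isBddLip_const (e : E) : IsBddLip (fun _ : A => e) :=
  ⟨⟨0, fun _ _ => by simp⟩, ‖e‖, fun _ => le_rfl⟩

lemma IsBddLip.add {f g : A → E} (hf : IsBddLip f) (hg : IsBddLip g) : IsBddLip (f + g) := by
  obtain ⟨⟨K₁, hK₁⟩, C₁, hC₁⟩ := hf
  obtain ⟨⟨K₂, hK₂⟩, C₂, hC₂⟩ := hg
  refine ⟨⟨K₁ + K₂, fun x y => ?_⟩, C₁ + C₂, fun x => ?_⟩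
  · rw [Pi.add_apply, Pi.add_apply, add_sub_add_comm, add_mul]
    exact (norm_add_le _ _).trans (add_le_add (hK₁ x y) (hK₂ x y))
  · exact (norm_add_le _ _).trans (add_le_add (hC₁ x) (hC₂ x))

lemma IsBddLip.const_smul {𝕜 : Type*} [RCLike 𝕜] [NormedSpace 𝕜 E] (c : 𝕜) {f : A → E}
    (hf : IsBddLip f) : IsBddLip (c • f) := by
  obtain ⟨⟨K, hK⟩, C, hC⟩ := hf
  refine ⟨⟨‖c‖ * K, fun x y => ?_⟩, ‖c‖ * C, fun x => ?_⟩
  · rw [Pi.smul_apply, Pi.smul_apply, ← smul_sub, norm_smul, mul_assoc]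
    exact mul_le_mul_of_nonneg_left (hK x y) (norm_nonneg c)
  · rw [Pi.smul_apply, norm_smul]
    exact mul_le_mul_of_nonneg_left (hC x) (norm_nonneg c)

lemma lipNorm_nonneg (f : A → E) : 0 ≤ lipNorm f :=
  le_max_of_le_right (Real.iSup_nonneg fun _ => norm_nonneg _)

lemma IsBddLip.norm_le_lipNorm {f : A → E} (hf : IsBddLip f) (a : A) : ‖f a‖ ≤ lipNorm f := by
  obtain ⟨-, C, hC⟩ := hf
  exact (le_ciSup ⟨C, forall_mem_range.2 hC⟩ a).trans (le_max_right _ _)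

lemma IsBddLip.norm_sub_le_lipNorm_mul {f : A → E} (hf : IsBddLip f) (a b : A) :
    ‖f a - f b‖ ≤ lipNorm f * dist a b := by
  refine le_trans ?_ (mul_le_mul_of_nonneg_right (le_max_left _ _) dist_nonneg)
  rcases eq_or_ne a b with rfl | hab
  · simp
  obtain ⟨⟨K, hK⟩, -⟩ := hf
  have hpos : 0 < dist a b := dist_pos.2 hab
  have hne : {K : ℝ | 0 ≤ K ∧ ∀ x y : A, ‖f x - f y‖ ≤ K * dist x y}.Nonempty :=
    ⟨max K 0, le_max_right _ _, fun x y =>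
      (hK x y).trans (mul_le_mul_of_nonneg_right (le_max_left _ _) dist_nonneg)⟩
  rw [← div_le_iff₀ hpos]
  exact le_csInf hne fun K hK => (div_le_iff₀ hpos).2 (hK.2 a b)

lemma lipNorm_le {g : A → E} {M : ℝ} (hM : 0 ≤ M) (hlip : ∀ a b, ‖g a - g b‖ ≤ M * dist a b)
    (hbd : ∀ a, ‖g a‖ ≤ M) : lipNorm g ≤ M :=
  max_le (csInf_le ⟨0, fun _ hK => hK.1⟩ ⟨hM, hlip⟩) (Real.iSup_le hbd hM)

/-- Beyond distance `2` the Lipschitz estimate follows from the sup-norm bound, which is why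
only distances below `2` need to be controlled. -/
lemma IsBddLip.comp_iso {𝕜 : Type*} [RCLike 𝕜] [NormedSpace 𝕜 E] {f : A → E} (hf : IsBddLip f)
    {σ : B → A} {U : B → E ≃ₗᵢ[𝕜] E} {g : B → E}
    (hσ : ∀ b b', dist b b' < 2 → dist (σ b) (σ b') ≤ dist b b')
    (hU : ∀ b b', dist b b' < 2 → U b = U b') (hg : ∀ b, g b = U b (f (σ b))) :
    IsBddLip g ∧ lipNorm g ≤ lipNorm f := by
  have hM := lipNorm_nonneg f
  have hbd : ∀ b, ‖g b‖ ≤ lipNorm f := fun b => by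
    rw [hg, LinearIsometryEquiv.norm_map]
    exact hf.norm_le_lipNorm _
  have hlip : ∀ b b', ‖g b - g b'‖ ≤ lipNorm f * dist b b' := by
    intro b b'
    rcases lt_or_ge (dist b b') 2 with hlt | hge
    · rw [hg, hg, hU b b' hlt, ← map_sub, LinearIsometryEquiv.norm_map]
      exact (hf.norm_sub_le_lipNorm_mul _ _).trans (mul_le_mul_of_nonneg_left (hσ b b' hlt) hM)
    · calc ‖g b - g b'‖ ≤ lipNorm f + lipNorm f :=
            (norm_sub_le _ _).trans (add_le_add (hbd b) (hbd b'))
        _ ≤ lipNorm f * dist b b' := by nlinarith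
  exact ⟨⟨⟨_, hlip⟩, _, hbd⟩, lipNorm_le hM hlip hbd⟩

end BddLip

lemma PreservesDistLT2.exists_dist_le_mul {A B : Type*} [MetricSpace A] [MetricSpace B]
    [CompactSpace A] {σ : B → A} (hσ : PreservesDistLT2 σ) :
    ∃ K : ℝ, ∀ b b', dist (σ b) (σ b') ≤ K * dist b b' := by
  refine ⟨max 1 (diam (univ : Set A)), fun b b' => ?_⟩
  rcases lt_or_ge (dist b b') 2 with hlt | hge
  · rw [hσ b b' hlt]
    exact le_mul_of_one_le_left dist_nonneg (le_max_left _ _)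
  · calc dist (σ b) (σ b') ≤ max 1 (diam (univ : Set A)) * 1 := by
          rw [mul_one]
          exact (dist_le_diam_of_mem isCompact_univ.isBounded trivial trivial).trans
            (le_max_right _ _)
      _ ≤ _ := mul_le_mul_of_nonneg_left (by linarith) (zero_le_one.trans (le_max_left _ _))

lemma continuous_of_sameTwoComponent {B Z : Type*} [MetricSpace B] [TopologicalSpace Z]
    {g : B → Z} (hg : ∀ b b', SameTwoComponent b b' → g b = g b') : Continuous g :=
  continuous_iff_continuousAt.2 fun b => continuousAt_const.congr <|
    eventually_nhds_iff.2 ⟨2, two_pos, fun b' h => hg b b' (.single (by rwa [dist_comm]))⟩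

lemma exists_lt_dist_lt_of_compactSpace {Y : Type*} [MetricSpace Y] [CompactSpace Y]
    (u : ℕ → Y) {δ : ℝ} (hδ : 0 < δ) : ∃ m n, m < n ∧ dist (u m) (u n) < δ := by
  obtain ⟨_, φ, hφ, hlim⟩ := CompactSpace.tendsto_subseq u
  obtain ⟨N, hN⟩ := Metric.cauchySeq_iff'.1 hlim.cauchySeq δ hδ
  exact ⟨φ N, φ (N + 1), hφ N.lt_succ_self, by rw [dist_comm]; exact hN (N + 1) N.le_succ⟩

/-- If `y` missed the (closed) range of `g`, the orbit of `y` would be uniformly separated: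
a small distance between two orbit points pulls back to one between `y` and the range. -/
theorem surjective_of_dist_eq_of_lt {Y : Type*} [MetricSpace Y] [CompactSpace Y] {r : ℝ}
    (hr : 0 < r) {g : Y → Y} (hfwd : ∀ a b, dist a b < r → dist (g a) (g b) = dist a b)
    (hbwd : ∀ a b, dist (g a) (g b) < r → dist (g a) (g b) = dist a b) : Surjective g := by
  have hcont : Continuous g := Metric.continuous_iff.2 fun a ε hε =>
    ⟨min ε r, lt_min hε hr, fun b hb => by
      rw [hfwd b a (hb.trans_le (min_le_right _ _))]
      exact hb.trans_le (min_le_left _ _)⟩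
  have hiter : ∀ n a b, dist (g^[n] a) (g^[n] b) < r → dist a b = dist (g^[n] a) (g^[n] b) := by
    intro n
    induction n with
    | zero => exact fun _ _ _ => rfl
    | succ n ih =>
      intro a b h
      rw [iterate_succ_apply', iterate_succ_apply'] at h ⊢
      have hg := hbwd _ _ h
      rw [hg] at h ⊢
      exact ih a b h
  intro y
  by_contra hy
  obtain ⟨ε, hε, hball⟩ :=
    Metric.isOpen_iff.1 (isCompact_range hcont).isClosed.isOpen_compl y hy
  obtain ⟨m, n, hmn, hd⟩ := exists_lt_dist_lt_of_compactSpace (fun n => g^[n] y) (lt_min hε hr)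
  obtain ⟨k, rfl⟩ := Nat.exists_eq_add_of_lt hmn
  rw [add_assoc, iterate_add_apply] at hd
  have hk := hiter m y (g^[k + 1] y) (hd.trans_le (min_le_right _ _))
  refine @hball (g^[k + 1] y) ?_ ⟨g^[k] y, (iterate_succ_apply' g k y).symm⟩
  rw [mem_ball, dist_comm, hk]
  exact hd.trans_le (min_le_left _ _)

section Banach

variable {𝕜 E : Type*} [RCLike 𝕜] [NormedAddCommGroup E] [NormedSpace 𝕜 E]

lemma IsSmooth.eq_of_norm_eq_one (hsm : IsSmooth 𝕜 E) {w : E} (hw : w ≠ 0)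
    {u v : StrongDual 𝕜 E} (hu : ‖u‖ = 1) (hv : ‖v‖ = 1) (huw : u w = ‖w‖) (hvw : v w = ‖w‖) :
    u = v := by
  have hnorming : ∀ u : StrongDual 𝕜 E, u w = ‖w‖ → u ((‖w‖⁻¹ : 𝕜) • w) = 1 := fun u h => by
    rw [map_smul, h, smul_eq_mul, inv_mul_cancel₀ (by simpa using hw)]
  exact (hsm _ (norm_smul_inv_norm hw)).unique ⟨hu, hnorming u huw⟩ ⟨hv, hnorming v hvw⟩

/-- Apply a norming functional `u` of `c := W⁻¹ p - z`: by smoothness, `u ∘ J⁻¹` is the same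
for all isometries `J` sending `c` to `w c`, and then `u (W⁻¹ p) = u z`, i.e. `‖c‖ = 0`. -/
lemma IsSmooth.eq_apply_of_forall_exists_iso (hsm : IsSmooth 𝕜 E) {W : E ≃ₗᵢ[𝕜] E}
    {w : E → E} {p z : E} (hp : ∀ e ≠ 0, ∃ J : E ≃ₗᵢ[𝕜] E, p = J z ∧ w e = J e)
    (hW : ∀ e ≠ 0, ∀ a, ∃ J : E ≃ₗᵢ[𝕜] E, W a = J a ∧ w e = J e) : p = W z := by
  by_contra hne
  set c := W.symm p - z
  have hc : c ≠ 0 := sub_ne_zero.2 fun h => hne (by rw [← h, W.apply_symm_apply])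
  obtain ⟨u, hu, huc⟩ := exists_dual_vector 𝕜 c (norm_ne_zero_iff.2 hc)
  have huniq : ∀ J₁ J₂ : E ≃ₗᵢ[𝕜] E, J₁ c = J₂ c → ∀ a, u (J₁.symm a) = u (J₂.symm a) := by
    intro J₁ J₂ h a
    have hJ : ∀ J : E ≃ₗᵢ[𝕜] E, u.comp (J.symm : E →L[𝕜] E) (J c) = ‖J c‖ := fun J => by
      simp [huc]
    refine DFunLike.congr_fun (hsm.eq_of_norm_eq_one (by simpa using hc)
      ((u.opNorm_comp_linearIsometryEquiv J₁.symm).trans hu)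
      ((u.opNorm_comp_linearIsometryEquiv J₂.symm).trans hu) (hJ J₁) ?_) a
    rw [h]
    exact hJ J₂
  obtain ⟨J₁, hpJ, hwJ⟩ := hp c hc
  have hWJ : ∀ a, u (J₁.symm (W a)) = u a := fun a => by
    obtain ⟨J₂, hWa, hwJ₂⟩ := hW c hc a
    rw [huniq J₁ J₂ (hwJ.symm.trans hwJ₂), hWa, J₂.symm_apply_apply]
  have hu0 : u c = 0 := by
    rw [map_sub, ← hWJ (W.symm p), W.apply_symm_apply, hpJ, J₁.symm_apply_apply, sub_self]
  rw [huc, RCLike.ofReal_eq_zero, norm_eq_zero] at hu0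
  exact hc hu0

lemma TwoIsoReflexive.exists_linearIsometryEquiv (h2ir : TwoIsoReflexive 𝕜 E) {D : E → E}
    (hD : ∀ a b, ∃ T : E ≃ₗᵢ[𝕜] E, D a = T a ∧ D b = T b) :
    ∃ W : E ≃ₗᵢ[𝕜] E, ∀ a, W a = D a := by
  obtain ⟨hadd, hsmul, hsurj⟩ := h2ir D hD
  have hnorm : ∀ a, ‖D a‖ = ‖a‖ := fun a => by
    obtain ⟨T, hT, -⟩ := hD a a
    rw [hT, T.norm_map]
  exact ⟨LinearIsometryEquiv.ofSurjective ⟨⟨⟨D, hadd⟩, hsmul⟩, hnorm⟩ hsurj, fun _ => rfl⟩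

end Banach

section Peak

variable {𝕜 A E : Type*} [RCLike 𝕜] [MetricSpace A] [NormedAddCommGroup E] [NormedSpace 𝕜 E]

variable (𝕜) in
noncomputable def peak (x : A) (e : E) : A → E :=
  fun z => ((max (1 - dist z x) 0 : ℝ) : 𝕜) • e

lemma peak_self (x : A) (e : E) : peak 𝕜 x e x = e := by
  simp [peak]

lemma norm_peak (x : A) (e : E) (z : A) : ‖peak 𝕜 x e z‖ = max (1 - dist z x) 0 * ‖e‖ := by
  rw [peak, norm_smul, RCLike.norm_ofReal, abs_of_nonneg (le_max_right _ _)]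

lemma norm_peak_eq_iff {x : A} {e : E} (he : e ≠ 0) {z : A} : ‖peak 𝕜 x e z‖ = ‖e‖ ↔ z = x := by
  rw [norm_peak, mul_eq_right₀ (norm_ne_zero_iff.2 he)]
  constructor
  · intro h
    by_contra hzx
    have : max (1 - dist z x) 0 < 1 := max_lt (by linarith [dist_pos.2 hzx]) one_pos
    exact this.ne h
  · rintro rfl
    simp

variable (𝕜) in
lemma isBddLip_peak (x : A) (e : E) : IsBddLip (peak 𝕜 x e) := by
  refine ⟨⟨‖e‖, fun z z' => ?_⟩, ‖e‖, fun z => ?_⟩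
  · rw [peak, peak, ← sub_smul, ← RCLike.ofReal_sub, norm_smul, RCLike.norm_ofReal, mul_comm]
    refine mul_le_mul_of_nonneg_left ((abs_max_sub_max_le_abs _ _ _).trans ?_) (norm_nonneg e)
    rw [sub_sub_sub_cancel_left, dist_comm z z']
    exact abs_dist_sub_le z' z x
  · rw [norm_peak]
    exact mul_le_of_le_one_left (norm_nonneg e)
      (max_le (by linarith [dist_nonneg (x := z) (y := x)]) zero_le_one)

lemma norm_apply_peak_eq_iff {Y : Type*} {Δ : (A → E) → (Y → E)} {x : A} {e : E} (he : e ≠ 0)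
    {φ : Y → A} {J : Y → E ≃ₗᵢ[𝕜] E}
    (hrep : ∀ y, Δ (peak 𝕜 x e) y = J y (peak 𝕜 x e (φ y))) {y : Y} :
    ‖Δ (peak 𝕜 x e) y‖ = ‖e‖ ↔ φ y = x := by
  rw [hrep, LinearIsometryEquiv.norm_map, norm_peak_eq_iff he]

end Peak

section StandardIso

variable {𝕜 X Y E : Type*} [RCLike 𝕜] [MetricSpace X] [MetricSpace Y] [NormedAddCommGroup E]
  [NormedSpace 𝕜 E]

/-- The inverse of `f ↦ J (f ∘ φ)` is `g ↦ J⁻¹ (g ∘ φ⁻¹)`, again of the same form. -/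
theorem IsStandardLipIso.isLipIso {T : (X → E) → (Y → E)} (hT : IsStandardLipIso 𝕜 T) :
    IsLipIso 𝕜 T := by
  obtain ⟨φ, ρ, J, hl, hr, hφ, hρ, hJ, hrep⟩ := hT
  have hJ2 : ∀ y y', dist y y' < 2 → J y = J y' := fun y y' h => hJ y y' (.single h)
  have hfwd : ∀ f, IsBddLip f → IsBddLip (T f) ∧ lipNorm (T f) ≤ lipNorm f := fun f hf =>
    hf.comp_iso (fun y y' h => (hφ y y' h).le) hJ2 (hrep f hf)
  have hbwd : ∀ g : Y → E, IsBddLip g →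
      IsBddLip (fun x => (J (ρ x)).symm (g (ρ x))) ∧
        lipNorm (fun x => (J (ρ x)).symm (g (ρ x))) ≤ lipNorm g := fun g hg =>
    hg.comp_iso (fun x x' h => (hρ x x' h).le)
      (fun x x' h => by rw [hJ2 _ _ (by rwa [hρ x x' h])]) fun _ => rfl
  have hinv : ∀ f, IsBddLip f → (fun x => (J (ρ x)).symm (T f (ρ x))) = f := fun f hf =>
    funext fun x => by rw [hrep f hf, hr x, LinearIsometryEquiv.symm_apply_apply]
  refine ⟨fun f hf => (hfwd f hf).1, fun f g hf hg => ?_, fun c f hf => ?_, fun f hf => ?_,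
    fun g hg => ⟨_, (hbwd g hg).1, funext fun y => ?_⟩⟩
  · funext y
    simp [hrep _ (hf.add hg), hrep f hf, hrep g hg]
  · funext y
    simp [hrep _ (hf.const_smul c), hrep f hf]
  · refine le_antisymm (hfwd f hf).2 ?_
    simpa only [hinv f hf] using (hbwd (T f) (hfwd f hf).1).2
  · rw [hrep _ (hbwd g hg).1, hl y, LinearIsometryEquiv.apply_symm_apply]

namespace Is2LocalStdLipIso

variable {Δ : (X → E) → (Y → E)}

lemma exists_rep (hΔ : Is2LocalStdLipIso 𝕜 Δ) {f g : X → E} (hf : IsBddLip f)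
    (hg : IsBddLip g) :
    ∃ (φ : Y → X) (ρ : X → Y) (J : Y → E ≃ₗᵢ[𝕜] E),
      LeftInverse ρ φ ∧ RightInverse ρ φ ∧ PreservesDistLT2 φ ∧ PreservesDistLT2 ρ ∧
      (∀ y y', SameTwoComponent y y' → J y = J y') ∧
      (∀ y, Δ f y = J y (f (φ y))) ∧ ∀ y, Δ g y = J y (g (φ y)) := by
  obtain ⟨T, ⟨φ, ρ, J, hl, hr, hφ, hρ, hJ, hrep⟩, hTf, hTg⟩ := hΔ f g hf hg
  exact ⟨φ, ρ, J, hl, hr, hφ, hρ, hJ, fun y => (congrFun hTf y).trans (hrep f hf y),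
    fun y => (congrFun hTg y).trans (hrep g hg y)⟩

lemma isStandardLipIso_of_subsingleton [Subsingleton E] (hΔ : Is2LocalStdLipIso 𝕜 Δ) :
    IsStandardLipIso 𝕜 Δ := by
  obtain ⟨φ, ρ, J, hl, hr, hφ, hρ, hJ, -⟩ := hΔ.exists_rep (isBddLip_const 0) (isBddLip_const 0)
  exact ⟨φ, ρ, J, hl, hr, hφ, hρ, hJ, fun _ _ _ => Subsingleton.elim _ _⟩

lemma exists_norm_apply_peak_eq (hΔ : Is2LocalStdLipIso 𝕜 Δ) (e : E) (x : X) :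
    ∃ y, ‖Δ (peak 𝕜 x e) y‖ = ‖e‖ := by
  obtain ⟨_, ρ, _, -, hr, -, -, -, hrep, -⟩ :=
    hΔ.exists_rep (isBddLip_peak 𝕜 x e) (isBddLip_peak 𝕜 x e)
  exact ⟨ρ x, by rw [hrep, LinearIsometryEquiv.norm_map, hr x, peak_self]⟩

/-- For `e ≠ 0`, every standard isometry agreeing with `Δ` at `peak 𝕜 x e` maps this point to `x`
(`norm_apply_peak_eq_iff`); it becomes `ψ⁻¹ x` in the final representation. -/
noncomputable def peakPoint (hΔ : Is2LocalStdLipIso 𝕜 Δ) (e : E) (x : X) : Y :=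
  (hΔ.exists_norm_apply_peak_eq e x).choose

lemma norm_apply_peakPoint (hΔ : Is2LocalStdLipIso 𝕜 Δ) (e : E) (x : X) :
    ‖Δ (peak 𝕜 x e) (hΔ.peakPoint e x)‖ = ‖e‖ :=
  (hΔ.exists_norm_apply_peak_eq e x).choose_spec

variable {e₀ : E}

lemma norm_apply_peak_peakPoint (hΔ : Is2LocalStdLipIso 𝕜 Δ) (he₀ : e₀ ≠ 0) (x : X) (e : E) :
    ‖Δ (peak 𝕜 x e) (hΔ.peakPoint e₀ x)‖ = ‖e‖ := by
  obtain ⟨φ, _, _, -, -, -, -, -, h₀, h⟩ :=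
    hΔ.exists_rep (isBddLip_peak 𝕜 x e₀) (isBddLip_peak 𝕜 x e)
  rw [h, (norm_apply_peak_eq_iff he₀ h₀).1 (hΔ.norm_apply_peakPoint e₀ x), peak_self,
    LinearIsometryEquiv.norm_map]

lemma exists_iso_apply_peakPoint (hΔ : Is2LocalStdLipIso 𝕜 Δ) (he₀ : e₀ ≠ 0) (x : X) {e : E}
    (he : e ≠ 0) {f : X → E} (hf : IsBddLip f) :
    ∃ J : E ≃ₗᵢ[𝕜] E, Δ f (hΔ.peakPoint e₀ x) = J (f x) ∧
      Δ (peak 𝕜 x e) (hΔ.peakPoint e₀ x) = J e := by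
  obtain ⟨φ, _, J, -, -, -, -, -, hrep, hpk⟩ := hΔ.exists_rep hf (isBddLip_peak 𝕜 x e)
  have hx : φ (hΔ.peakPoint e₀ x) = x :=
    (norm_apply_peak_eq_iff he hpk).1 (hΔ.norm_apply_peak_peakPoint he₀ x e)
  exact ⟨J (hΔ.peakPoint e₀ x), by rw [hrep, hx], by rw [hpk, hx, peak_self]⟩

lemma exists_inverse_at_peakPoint (hΔ : Is2LocalStdLipIso 𝕜 Δ) (he₀ : e₀ ≠ 0) (x x' : X) :
    ∃ (φ : Y → X) (ρ : X → Y), LeftInverse ρ φ ∧ PreservesDistLT2 φ ∧ PreservesDistLT2 ρ ∧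
      φ (hΔ.peakPoint e₀ x) = x ∧ φ (hΔ.peakPoint e₀ x') = x' := by
  obtain ⟨φ, ρ, _, hl, -, hφ, hρ, -, h, h'⟩ :=
    hΔ.exists_rep (isBddLip_peak 𝕜 x e₀) (isBddLip_peak 𝕜 x' e₀)
  exact ⟨φ, ρ, hl, hφ, hρ, (norm_apply_peak_eq_iff he₀ h).1 (hΔ.norm_apply_peakPoint e₀ x),
    (norm_apply_peak_eq_iff he₀ h').1 (hΔ.norm_apply_peakPoint e₀ x')⟩

lemma preservesDistLT2_peakPoint (hΔ : Is2LocalStdLipIso 𝕜 Δ) (he₀ : e₀ ≠ 0) :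
    PreservesDistLT2 (hΔ.peakPoint e₀) := by
  intro x x' h
  obtain ⟨φ, ρ, hl, -, hρ, hx, hx'⟩ := hΔ.exists_inverse_at_peakPoint he₀ x x'
  rw [← hl (hΔ.peakPoint e₀ x), ← hl (hΔ.peakPoint e₀ x'), hx, hx']
  exact hρ x x' h

lemma dist_eq_of_dist_peakPoint_lt (hΔ : Is2LocalStdLipIso 𝕜 Δ) (he₀ : e₀ ≠ 0) {x x' : X}
    (h : dist (hΔ.peakPoint e₀ x) (hΔ.peakPoint e₀ x') < 2) :
    dist (hΔ.peakPoint e₀ x) (hΔ.peakPoint e₀ x') = dist x x' := by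
  obtain ⟨φ, ρ, -, hφ, -, hx, hx'⟩ := hΔ.exists_inverse_at_peakPoint he₀ x x'
  rw [← hφ _ _ h, hx, hx']

lemma peakPoint_injective (hΔ : Is2LocalStdLipIso 𝕜 Δ) (he₀ : e₀ ≠ 0) :
    Injective (hΔ.peakPoint e₀) := by
  intro x x' h
  obtain ⟨φ, _, -, -, -, hx, hx'⟩ := hΔ.exists_inverse_at_peakPoint he₀ x x'
  rw [← hx, ← hx', h]

/-- Composed with a bijection `φ : Y → X` preserving distances below `2` both ways, the peak
point map becomes a self-map of the compact space `Y` of the same kind, hence onto. -/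
lemma peakPoint_surjective [CompactSpace Y] (hΔ : Is2LocalStdLipIso 𝕜 Δ) (he₀ : e₀ ≠ 0) :
    Surjective (hΔ.peakPoint e₀) := by
  obtain ⟨φ, ρ, -, hl, -, hφ, hρ, -⟩ := hΔ.exists_rep (isBddLip_const 0) (isBddLip_const 0)
  refine Surjective.of_comp (g := φ) (surjective_of_dist_eq_of_lt two_pos (fun a b h => ?_)
    fun a b h => ?_)
  · exact (hΔ.preservesDistLT2_peakPoint he₀ _ _ (by rwa [hφ a b h])).trans (hφ a b h)
  · have hd := hΔ.dist_eq_of_dist_peakPoint_lt he₀ h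
    simp only [Function.comp_apply, hd] at h ⊢
    rw [← hρ _ _ h, hl a, hl b]

lemma exists_iso_eq_apply_const (hΔ : Is2LocalStdLipIso 𝕜 Δ) (h2ir : TwoIsoReflexive 𝕜 E)
    (y : Y) : ∃ W : E ≃ₗᵢ[𝕜] E, ∀ e, W e = Δ (fun _ => e) y :=
  h2ir.exists_linearIsometryEquiv fun a b => by
    obtain ⟨_, _, J, -, -, -, -, -, ha, hb⟩ := hΔ.exists_rep (isBddLip_const a) (isBddLip_const b)
    exact ⟨J y, ha y, hb y⟩

lemma apply_const_eq (hΔ : Is2LocalStdLipIso 𝕜 Δ) (e : E) {y y' : Y}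
    (h : SameTwoComponent y y') : Δ (fun _ => e) y = Δ (fun _ => e) y' := by
  obtain ⟨_, _, _, -, -, -, -, hJ, hrep, -⟩ := hΔ.exists_rep (isBddLip_const e) (isBddLip_const e)
  rw [hrep, hrep, hJ y y' h]

theorem isStandardLipIso [CompactSpace Y] [Nontrivial E] (hΔ : Is2LocalStdLipIso 𝕜 Δ)
    (hsm : IsSmooth 𝕜 E) (h2ir : TwoIsoReflexive 𝕜 E) : IsStandardLipIso 𝕜 Δ := by
  obtain ⟨e₀, he₀⟩ := exists_ne (0 : E)
  choose V hV using hΔ.exists_iso_eq_apply_const h2ir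
  have hrep : ∀ f, IsBddLip f → ∀ x, Δ f (hΔ.peakPoint e₀ x) = V _ (f x) := fun f hf x =>
    hsm.eq_apply_of_forall_exists_iso (fun e he => hΔ.exists_iso_apply_peakPoint he₀ x he hf)
      fun e he c => by
        obtain ⟨J, hc, hpk⟩ := hΔ.exists_iso_apply_peakPoint he₀ x he (isBddLip_const c)
        exact ⟨J, (hV _ c).trans hc, hpk⟩
  let P := Equiv.ofBijective _ ⟨hΔ.peakPoint_injective he₀, hΔ.peakPoint_surjective he₀⟩
  have hP : ∀ y, hΔ.peakPoint e₀ (P.symm y) = y := P.apply_symm_apply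
  refine ⟨P.symm, P, V, P.apply_symm_apply, P.symm_apply_apply, fun y y' h => ?_,
    hΔ.preservesDistLT2_peakPoint he₀, fun y y' h => LinearIsometryEquiv.ext fun e => ?_,
    fun f hf y => ?_⟩
  · have hd := hΔ.dist_eq_of_dist_peakPoint_lt he₀ (x := P.symm y) (x' := P.symm y')
    rw [hP, hP] at hd
    exact (hd h).symm
  · rw [hV, hV, hΔ.apply_const_eq e h]
  · simpa only [hP] using hrep f hf (P.symm y)

end Is2LocalStdLipIso

end StandardIso

theorem stmt10_general {𝕜 X Y E : Type*} [RCLike 𝕜]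
    [MetricSpace X] [CompactSpace X] [MetricSpace Y] [CompactSpace Y]
    [NormedAddCommGroup E] [NormedSpace 𝕜 E]
    (hsm : IsSmooth 𝕜 E) (h2ir : TwoIsoReflexive 𝕜 E)
    (Δ : (X → E) → (Y → E)) (hΔ : Is2LocalStdLipIso 𝕜 Δ) :
    (∃ (ψ : Y → X) (V : Y → (E ≃ₗᵢ[𝕜] E)),
      Function.Bijective ψ ∧
      (∃ K : ℝ, ∀ y y' : Y, dist (ψ y) (ψ y') ≤ K * dist y y') ∧
      (∃ ψ' : X → Y, Function.LeftInverse ψ' ψ ∧ Function.RightInverse ψ' ψ ∧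
        ∃ K : ℝ, ∀ x x' : X, dist (ψ' x) (ψ' x') ≤ K * dist x x') ∧
      (∀ e : E, Continuous fun y : Y => V y e) ∧
      ∀ (y : Y) (f : X → E), IsBddLip f → Δ f y = V y (f (ψ y))) ∧
    IsLipIso 𝕜 Δ := by
  have hstd : IsStandardLipIso 𝕜 Δ := by
    rcases subsingleton_or_nontrivial E with _ | _
    · exact hΔ.isStandardLipIso_of_subsingleton
    · exact hΔ.isStandardLipIso hsm h2ir
  refine ⟨?_, hstd.isLipIso⟩
  obtain ⟨φ, ρ, J, hl, hr, hφ, hρ, hJ, hrep⟩ := hstd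
  exact ⟨φ, J, ⟨hl.injective, hr.surjective⟩, hφ.exists_dist_le_mul,
    ⟨ρ, hl, hr, hρ.exists_dist_le_mul⟩,
    fun e => continuous_of_sameTwoComponent fun y y' h => by rw [hJ y y' h],
    fun y f hf => hrep f hf y⟩

/-- Theorem 2.7: every 2-local standard isometry on vector-valued Lipschitz spaces over
compact metric spaces is a generalized composition operator and a surjective linear
isometry. -/
theorem stmt10 {𝕜 X Y E : Type*} [RCLike 𝕜]
    [MetricSpace X] [CompactSpace X] [MetricSpace Y] [CompactSpace Y]
    [NormedAddCommGroup E] [NormedSpace 𝕜 E] [CompleteSpace E]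
    (hsm : IsSmooth 𝕜 E) (hrefl : IsReflexiveSp 𝕜 E) (h2ir : TwoIsoReflexive 𝕜 E)
    (Δ : (X → E) → (Y → E)) (hΔ : Is2LocalStdLipIso 𝕜 Δ) :
    (∃ (ψ : Y → X) (V : Y → (E ≃ₗᵢ[𝕜] E)),
      Function.Bijective ψ ∧
      (∃ K : ℝ, ∀ y y' : Y, dist (ψ y) (ψ y') ≤ K * dist y y') ∧
      (∃ ψ' : X → Y, Function.LeftInverse ψ' ψ ∧ Function.RightInverse ψ' ψ ∧
        ∃ K : ℝ, ∀ x x' : X, dist (ψ' x) (ψ' x') ≤ K * dist x x') ∧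
      (∀ e : E, Continuous fun y : Y => V y e) ∧
      ∀ (y : Y) (f : X → E), IsBddLip f → Δ f y = V y (f (ψ y))) ∧
    IsLipIso 𝕜 Δ :=
  stmt10_general hsm h2ir Δ hΔ
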